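/- Let b : [0, K] → ℝ be C¹ with 0 ≤ b'(u) ≤ b0 on [0, K], τ : [0, ∞) → [0, ∞) C¹ with 0 ≤ τ'(u) ≤ T on [0, K], c > 0, d > 0, and β ≥ d(1 + b0·K·T) + ((1 + b0·K·T)²·c²)/4. Then for any continuous ϕ1, ϕ2 : ℝ → [0, K] with ϕ2 ≤ ϕ1 pointwise, each Lipschitz with constant (βK)/(c(1 + b0·K·T)), the map H(ϕ)(ξ) = βϕ(ξ) − dϕ(ξ) + b(ϕ(ξ − cτ(ϕ(ξ)))) satisfies H(ϕ1)(ξ) ≥ H(ϕ2)(ξ) for all ξ ∈ ℝ. -/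

import Mathlib

/-!
Write `ξᵢ = ξ - c τ(ϕᵢ ξ)`. Since `τ` is increasing, `ξ₁ ≤ ξ₂` and `ξ₂ - ξ₁ ≤ c T (ϕ₁ ξ - ϕ₂ ξ)`.
Monotonicity of `b` gives `b (ϕ₁ ξ₁) ≥ b (ϕ₂ ξ₁)`, and the Lipschitz bound on `ϕ₂` together with
`b' ≤ b₀` gives `b (ϕ₂ ξ₁) - b (ϕ₂ ξ₂) ≥ -b₀ T L (ϕ₁ ξ - ϕ₂ ξ)` with `L = β K / (1 + b₀ K T)`.
The choice of `β` makes `b₀ T L ≤ β - d`, so the term `(β - d) (ϕ₁ ξ - ϕ₂ ξ)` absorbs this loss.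
-/

open Set

section DerivBounds

variable {s : Set ℝ} {f f' : ℝ → ℝ}

lemma monotoneOn_of_hasDerivAt_nonneg (hs : Convex ℝ s) (hf : ∀ u ∈ s, HasDerivAt f (f' u) u)
    (hf' : ∀ u ∈ s, 0 ≤ f' u) : MonotoneOn f s :=
  monotoneOn_of_hasDerivWithinAt_nonneg hs
    (fun u hu ↦ (hf u hu).continuousAt.continuousWithinAt)
    (fun u hu ↦ (hf u (interior_subset hu)).hasDerivWithinAt)
    (fun u hu ↦ hf' u (interior_subset hu))

lemma sub_le_mul_sub_of_hasDerivAt_le {C : ℝ} (hs : Convex ℝ s)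
    (hf : ∀ u ∈ s, HasDerivAt f (f' u) u) (hf' : ∀ u ∈ s, f' u ≤ C)
    {u v : ℝ} (hu : u ∈ s) (hv : v ∈ s) (hvu : v ≤ u) : f u - f v ≤ C * (u - v) := by
  have hmono : MonotoneOn (fun x ↦ C * x - f x) s :=
    monotoneOn_of_hasDerivAt_nonneg hs
      (fun x hx ↦ ((hasDerivAt_id x).const_mul C).sub (hf x hx) |>.congr_deriv (by simp))
      (fun x hx ↦ sub_nonneg.2 (hf' x hx))
  have := hmono hv hu hvu
  linarith

end DerivBounds

lemma neg_mul_abs_sub_le_sub {s : Set ℝ} {b : ℝ → ℝ} {b0 x y : ℝ} (hb0 : 0 ≤ b0)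
    (hb : MonotoneOn b s) (hb_lip : ∀ u ∈ s, ∀ v ∈ s, v ≤ u → b u - b v ≤ b0 * (u - v))
    (hx : x ∈ s) (hy : y ∈ s) : -(b0 * |x - y|) ≤ b x - b y := by
  rcases le_total y x with hyx | hxy
  · have := hb hy hx hyx
    nlinarith [abs_nonneg (x - y)]
  · have := hb_lip y hy x hx hxy
    rw [abs_sub_comm, abs_of_nonneg (sub_nonneg.2 hxy)]
    linarith

lemma delayed_nonlinearity_quasi_monotone {K b0 T c L : ℝ} {b τ ϕ1 ϕ2 : ℝ → ℝ}
    (hb0 : 0 ≤ b0) (hc : 0 < c) (hL : 0 ≤ L)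
    (hb : MonotoneOn b (Icc 0 K))
    (hb_lip : ∀ u ∈ Icc 0 K, ∀ v ∈ Icc 0 K, v ≤ u → b u - b v ≤ b0 * (u - v))
    (hτ : MonotoneOn τ (Icc 0 K))
    (hτ_lip : ∀ u ∈ Icc 0 K, ∀ v ∈ Icc 0 K, v ≤ u → τ u - τ v ≤ T * (u - v))
    (hϕ1 : ∀ ξ, ϕ1 ξ ∈ Icc 0 K) (hϕ2 : ∀ ξ, ϕ2 ξ ∈ Icc 0 K) (hle : ∀ ξ, ϕ2 ξ ≤ ϕ1 ξ)
    (hlip2 : ∀ ξ1 ξ2, c * |ϕ2 ξ1 - ϕ2 ξ2| ≤ L * |ξ1 - ξ2|) (ξ : ℝ) :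
    -(b0 * T * L * (ϕ1 ξ - ϕ2 ξ)) ≤
      b (ϕ1 (ξ - c * τ (ϕ1 ξ))) - b (ϕ2 (ξ - c * τ (ϕ2 ξ))) := by
  set ξ1 := ξ - c * τ (ϕ1 ξ)
  set ξ2 := ξ - c * τ (ϕ2 ξ)
  have hτ_diff : 0 ≤ τ (ϕ1 ξ) - τ (ϕ2 ξ) := sub_nonneg.2 (hτ (hϕ2 ξ) (hϕ1 ξ) (hle ξ))
  have hshift : |ξ1 - ξ2| = c * (τ (ϕ1 ξ) - τ (ϕ2 ξ)) := by
    rw [abs_sub_comm, abs_of_nonneg (by simp only [ξ1, ξ2]; nlinarith)]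
    ring
  have hϕ2_shift : |ϕ2 ξ1 - ϕ2 ξ2| ≤ L * (T * (ϕ1 ξ - ϕ2 ξ)) := by
    have hlip := hlip2 ξ1 ξ2
    rw [hshift, mul_left_comm] at hlip
    calc |ϕ2 ξ1 - ϕ2 ξ2| ≤ L * (τ (ϕ1 ξ) - τ (ϕ2 ξ)) := le_of_mul_le_mul_left hlip hc
      _ ≤ L * (T * (ϕ1 ξ - ϕ2 ξ)) :=
        mul_le_mul_of_nonneg_left (hτ_lip _ (hϕ1 ξ) _ (hϕ2 ξ) (hle ξ)) hL
  have hb_mono : b (ϕ2 ξ1) ≤ b (ϕ1 ξ1) := hb (hϕ2 ξ1) (hϕ1 ξ1) (hle ξ1)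
  have hb_shift := neg_mul_abs_sub_le_sub hb0 hb hb_lip (hϕ2 ξ1) (hϕ2 ξ2)
  nlinarith [mul_le_mul_of_nonneg_left hϕ2_shift hb0]

lemma mul_mul_div_le_sub {K b0 T β d : ℝ} (hA : 0 < 1 + b0 * K * T)
    (hβ : d * (1 + b0 * K * T) ≤ β) : b0 * T * (β * K / (1 + b0 * K * T)) ≤ β - d := by
  rw [mul_div_assoc', div_le_iff₀ hA]
  nlinarith

theorem stmt_13_general (K b0 T c d β : ℝ) (hK : 0 < K) (hb0 : 0 < b0) (hT : 0 ≤ T)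
    (hc : 0 < c) (hd : 0 < d)
    (hβ : β ≥ d * (1 + b0 * K * T) + (1 + b0 * K * T) ^ 2 * c ^ 2 / 4)
    (b b' : ℝ → ℝ)
    (hb : ∀ u ∈ Set.Icc (0 : ℝ) K, HasDerivAt b (b' u) u)
    (hb' : ∀ u ∈ Set.Icc (0 : ℝ) K, 0 ≤ b' u ∧ b' u ≤ b0)
    (τ τ' : ℝ → ℝ)
    (hτ : ∀ u ∈ Set.Icc (0 : ℝ) K, HasDerivAt τ (τ' u) u)
    (hτ' : ∀ u ∈ Set.Icc (0 : ℝ) K, 0 ≤ τ' u ∧ τ' u ≤ T)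
    (ϕ1 ϕ2 : ℝ → ℝ)
    (hϕ1r : ∀ ξ, ϕ1 ξ ∈ Set.Icc (0 : ℝ) K)
    (hϕ2r : ∀ ξ, ϕ2 ξ ∈ Set.Icc (0 : ℝ) K)
    (hle : ∀ ξ, ϕ2 ξ ≤ ϕ1 ξ)
    (hlip2 : ∀ ξ1 ξ2, c * |ϕ2 ξ1 - ϕ2 ξ2| ≤ (β * K / (1 + b0 * K * T)) * |ξ1 - ξ2|)
    (H : (ℝ → ℝ) → ℝ → ℝ)
    (hH : ∀ ϕ ξ, H ϕ ξ = β * ϕ ξ - d * ϕ ξ + b (ϕ (ξ - c * τ (ϕ ξ)))) :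
    ∀ ξ : ℝ, H ϕ1 ξ ≥ H ϕ2 ξ := by
  have hA : 0 < 1 + b0 * K * T := by positivity
  have hβd : d * (1 + b0 * K * T) ≤ β := by
    have : 0 ≤ (1 + b0 * K * T) ^ 2 * c ^ 2 / 4 := by positivity
    linarith
  have hL : 0 ≤ β * K / (1 + b0 * K * T) := by
    have : 0 ≤ β := le_trans (by positivity) hβd
    positivity
  have hIcc : Convex ℝ (Icc (0 : ℝ) K) := convex_Icc 0 K
  intro ξ
  have hquasi := delayed_nonlinearity_quasi_monotone hb0.le hc hL
    (monotoneOn_of_hasDerivAt_nonneg hIcc hb fun u hu ↦ (hb' u hu).1)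
    (fun u hu v hv ↦ sub_le_mul_sub_of_hasDerivAt_le hIcc hb (fun x hx ↦ (hb' x hx).2) hu hv)
    (monotoneOn_of_hasDerivAt_nonneg hIcc hτ fun u hu ↦ (hτ' u hu).1)
    (fun u hu v hv ↦ sub_le_mul_sub_of_hasDerivAt_le hIcc hτ (fun x hx ↦ (hτ' x hx).2) hu hv)
    hϕ1r hϕ2r hle hlip2 ξ
  have hcoef := mul_le_mul_of_nonneg_right (mul_mul_div_le_sub hA hβd) (sub_nonneg.2 (hle ξ))
  rw [hH, hH]
  linarith

theorem stmt_13 (K b0 T c d β : ℝ) (hK : 0 < K) (hb0 : 0 < b0) (hT : 0 ≤ T)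
    (hc : 0 < c) (hd : 0 < d)
    (hβ : β ≥ d * (1 + b0 * K * T) + (1 + b0 * K * T) ^ 2 * c ^ 2 / 4)
    (b b' : ℝ → ℝ)
    (hb : ∀ u ∈ Set.Icc (0 : ℝ) K, HasDerivAt b (b' u) u)
    (hb' : ∀ u ∈ Set.Icc (0 : ℝ) K, 0 ≤ b' u ∧ b' u ≤ b0)
    (τ τ' : ℝ → ℝ)
    (hτnn : ∀ u, 0 ≤ u → 0 ≤ τ u)
    (hτ : ∀ u ∈ Set.Icc (0 : ℝ) K, HasDerivAt τ (τ' u) u)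
    (hτ' : ∀ u ∈ Set.Icc (0 : ℝ) K, 0 ≤ τ' u ∧ τ' u ≤ T)
    (ϕ1 ϕ2 : ℝ → ℝ)
    (hϕ1c : Continuous ϕ1) (hϕ2c : Continuous ϕ2)
    (hϕ1r : ∀ ξ, ϕ1 ξ ∈ Set.Icc (0 : ℝ) K)
    (hϕ2r : ∀ ξ, ϕ2 ξ ∈ Set.Icc (0 : ℝ) K)
    (hle : ∀ ξ, ϕ2 ξ ≤ ϕ1 ξ)
    (hlip1 : ∀ ξ1 ξ2, c * |ϕ1 ξ1 - ϕ1 ξ2| ≤ (β * K / (1 + b0 * K * T)) * |ξ1 - ξ2|)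
    (hlip2 : ∀ ξ1 ξ2, c * |ϕ2 ξ1 - ϕ2 ξ2| ≤ (β * K / (1 + b0 * K * T)) * |ξ1 - ξ2|)
    (H : (ℝ → ℝ) → ℝ → ℝ)
    (hH : ∀ ϕ ξ, H ϕ ξ = β * ϕ ξ - d * ϕ ξ + b (ϕ (ξ - c * τ (ϕ ξ)))) :
    ∀ ξ : ℝ, H ϕ1 ξ ≥ H ϕ2 ξ :=
  stmt_13_general K b0 T c d β hK hb0 hT hc hd hβ b b' hb hb' τ τ' hτ hτ' ϕ1 ϕ2 hϕ1r hϕ2r hle hlip2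
    H hH
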